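/- arXiv:math/0606194 — 7 statements merged into one kernel-verified Lean document; each statement's English description precedes it below -/
import Mathlib

section
/- Let α* be the real root of x³ - x - 1 = 0 and let A, B > 0 and C ≥ 0 be reals with C² ≤ A + B. Then min(√(C²/A), (C²/B)^{1/3}) ≤ α*. -/
theorem stmt7 (α : ℝ) (hα : α ^ 3 - α - 1 = 0)
    (A B C : ℝ) (hA : 0 < A) (hB : 0 < B) (hC : 0 ≤ C) (h : C ^ 2 ≤ A + B) :
    min (Real.sqrt (C ^ 2 / A)) ((C ^ 2 / B) ^ ((1 : ℝ) / 3)) ≤ α := by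
  have hα1 : 1 < α := by nlinarith [sq_nonneg (α + 1), sq_nonneg (α - 1), sq_nonneg α]
  have hα0 : 0 ≤ α := by linarith
  by_cases hcase : C ^ 2 ≤ α ^ 2 * A
  · refine le_trans (min_le_left _ _) ?_
    have : C ^ 2 / A ≤ α ^ 2 := by
      rw [div_le_iff₀ hA]; linarith
    calc Real.sqrt (C ^ 2 / A) ≤ Real.sqrt (α ^ 2) := Real.sqrt_le_sqrt this
      _ = α := Real.sqrt_sq hα0
  · refine le_trans (min_le_right _ _) ?_
    push_neg at hcase
    have hB3 : C ^ 2 ≤ α ^ 3 * B := by nlinarith [sq_nonneg α]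
    have hdiv : C ^ 2 / B ≤ α ^ 3 := by rw [div_le_iff₀ hB]; linarith
    have h0 : (0:ℝ) ≤ C ^ 2 / B := div_nonneg (sq_nonneg C) hB.le
    calc (C ^ 2 / B) ^ ((1:ℝ)/3) ≤ (α ^ 3) ^ ((1:ℝ)/3) :=
          Real.rpow_le_rpow h0 hdiv (by norm_num)
      _ = α := by
          rw [← Real.rpow_natCast α 3, ← Real.rpow_mul hα0]
          norm_num
end

section
/- Let p(z) = (z-1)(z+1)(z-a) with a in the closed first quadrant (Re a ≥ 0, Im a ≥ 0), and let ζ₁ = (a - √(a²+3))/3 where the square root branch is chosen so that √(a²+3) lies in the closed first quadrant. Then Re ζ₁ ≥ -√3/3, and hence |ζ₁ + 1| ≥ 1 - √3/3. -/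
theorem stmt8 (a : ℂ) (ha1 : 0 ≤ a.re) (ha2 : 0 ≤ a.im)
    (s : ℂ) (hs : s ^ 2 = a ^ 2 + 3) (hs1 : 0 ≤ s.re) (hs2 : 0 ≤ s.im)
    (ζ₁ : ℂ) (hζ₁ : ζ₁ = (a - s) / 3) :
    -(Real.sqrt 3 / 3) ≤ ζ₁.re ∧ 1 - Real.sqrt 3 / 3 ≤ ‖ζ₁ + 1‖ := by
  have h1 : s.re ^ 2 - s.im ^ 2 = a.re ^ 2 - a.im ^ 2 + 3 := by
    have := congrArg Complex.re hs
    simp [pow_two, Complex.mul_re] at this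
    nlinarith [this]
  have h2 : s.re * s.im = a.re * a.im := by
    have := congrArg Complex.im hs
    simp [pow_two, Complex.mul_im] at this
    nlinarith [this]
  have key : s.re - a.re ≤ Real.sqrt 3 := by
    by_cases hc : s.re ≤ a.re
    · linarith [Real.sqrt_nonneg 3]
    · push_neg at hc
      have hx : 0 < s.re := lt_of_le_of_lt ha1 hc
      have hy : s.im ≤ a.im := by nlinarith
      have hsq : (s.re - a.re) ^ 2 ≤ 3 := by nlinarith
      nlinarith [Real.sq_sqrt (by norm_num : (0:ℝ) ≤ 3), Real.sqrt_nonneg 3,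
        sq_nonneg (s.re - a.re - Real.sqrt 3)]
  have hre : ζ₁.re = (a.re - s.re) / 3 := by
    rw [hζ₁]
    have : (3 : ℂ) = ((3 : ℝ) : ℂ) := by norm_num
    rw [this, Complex.div_ofReal_re, Complex.sub_re]
  have hre1 : -(Real.sqrt 3 / 3) ≤ ζ₁.re := by rw [hre]; linarith
  refine ⟨hre1, ?_⟩
  have := Complex.re_le_norm (ζ₁ + 1)
  simp only [Complex.add_re, Complex.one_re] at this
  linarith
end

section
/- For any complex ζ, the identity 4ζ² = (3ζ²+1) + (ζ²-1) holds, hence |4ζ²| ≤ |3ζ²+1| + |ζ²-1|, and consequently (when both denominators are nonzero) min(|4ζ²/(3ζ²+1)|^{1/2}, |4ζ²/(ζ²-1)|^{1/3}) ≤ α*, where α* is the real root of x³ - x - 1 = 0. -/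
theorem stmt13 (α : ℝ) (hα : α ^ 3 - α - 1 = 0)
    (ζ : ℂ) (h1 : 3 * ζ ^ 2 + 1 ≠ 0) (h2 : ζ ^ 2 ≠ 1) :
    4 * ζ ^ 2 = (3 * ζ ^ 2 + 1) + (ζ ^ 2 - 1) ∧
    ‖4 * ζ ^ 2‖ ≤ ‖3 * ζ ^ 2 + 1‖ + ‖ζ ^ 2 - 1‖ ∧
    min (Real.sqrt (‖4 * ζ ^ 2 / (3 * ζ ^ 2 + 1)‖))
      ((‖4 * ζ ^ 2 / (ζ ^ 2 - 1)‖) ^ ((1 : ℝ) / 3)) ≤ α := by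
  have hα1 : 1 < α := by nlinarith [sq_nonneg α, sq_nonneg (α - 1), sq_nonneg (α + 1)]
  have heq : (4 : ℂ) * ζ ^ 2 = (3 * ζ ^ 2 + 1) + (ζ ^ 2 - 1) := by ring
  refine ⟨heq, ?_, ?_⟩
  · calc ‖4 * ζ ^ 2‖ = ‖(3 * ζ ^ 2 + 1) + (ζ ^ 2 - 1)‖ := by rw [heq]
      _ ≤ _ := norm_add_le _ _
  · by_cases hz : ζ = 0
    · subst hz
      simp [Real.zero_rpow (by norm_num : (1:ℝ)/3 ≠ 0)]
      linarith
    · by_contra hcon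
      push_neg at hcon
      rw [lt_min_iff] at hcon
      obtain ⟨ha, hb⟩ := hcon
      set M := ‖4 * ζ ^ 2‖ with hM
      set s := ‖3 * ζ ^ 2 + 1‖ with hs
      set t := ‖ζ ^ 2 - 1‖ with ht
      have hMpos : 0 < M := by
        rw [hM]
        apply norm_pos_iff.mpr
        simp [hz, pow_eq_zero_iff]
      have hspos : 0 < s := norm_pos_iff.mpr h1
      have htpos : 0 < t := norm_pos_iff.mpr (sub_ne_zero.mpr h2)
      have htri : M ≤ s + t := by
        calc M = ‖(3 * ζ ^ 2 + 1) + (ζ ^ 2 - 1)‖ := by rw [hM, heq]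
          _ ≤ s + t := norm_add_le _ _
      -- from ha : α < sqrt (M / s)
      have hdiv1 : ‖4 * ζ ^ 2 / (3 * ζ ^ 2 + 1)‖ = M / s := by
        rw [norm_div]
      have hdiv2 : ‖4 * ζ ^ 2 / (ζ ^ 2 - 1)‖ = M / t := by
        rw [norm_div]
      rw [hdiv1] at ha
      rw [hdiv2] at hb
      have hαpos : (0:ℝ) < α := by linarith
      have ha' : α ^ 2 < M / s := (Real.lt_sqrt hαpos.le).mp ha
      have hb' : α ^ 3 < M / t := by
        have h3 : ((M / t) ^ ((1:ℝ)/3)) ^ (3:ℕ) = M / t := by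
          rw [← Real.rpow_natCast ((M / t) ^ ((1:ℝ)/3)) 3, ← Real.rpow_mul (by positivity)]
          norm_num
        have h4 := pow_lt_pow_left₀ hb hαpos.le (by norm_num : 3 ≠ 0)
        rwa [h3] at h4
      have h1' : α ^ 2 * s < M := by
        rw [lt_div_iff₀ hspos] at ha'
        linarith
      have h2' : α ^ 3 * t < M := by
        rw [lt_div_iff₀ htpos] at hb'
        linarith
      nlinarith [mul_pos hMpos hαpos, mul_le_mul_of_nonneg_left htri (le_of_lt (pow_pos hαpos 3)),
        mul_lt_mul_of_pos_left h1' hαpos]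
end

section
/- Let z₁, ..., zₙ be distinct complex numbers (n ≥ 2) and let M be the (n-1)×(n-1) matrix M = diag(z₂, ..., zₙ) - (1/n)·e·vᵀ, where e is the all-ones vector and v is the vector with entries vᵢ = z_{i+1} - z₁ for i = 1, ..., n-1. Then every eigenvalue ζ of M that is distinct from all of z₁,...,zₙ satisfies 1/(ζ - z₁) + 1/(ζ - z₂) + ... + 1/(ζ - zₙ) = 0, i.e., ζ is a root of p' where p(z) = (z - z₁)···(z - zₙ). -/
theorem stmt14 (m : ℕ) (z : Fin (m + 2) → ℂ) (hz : Function.Injective z)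
    (M : Matrix (Fin (m + 1)) (Fin (m + 1)) ℂ)
    (hM : M = fun i j => (if i = j then z i.succ else 0) - (z j.succ - z 0) / (m + 2))
    (ζ : ℂ) (x : Fin (m + 1) → ℂ) (hx : x ≠ 0) (heig : M.mulVec x = ζ • x)
    (hζ : ∀ i, ζ ≠ z i) :
    ∑ i : Fin (m + 2), 1 / (ζ - z i) = 0 := by
  have hn : ((m : ℂ) + 2) ≠ 0 := by
    have : ((m + 2 : ℕ) : ℂ) ≠ 0 := Nat.cast_ne_zero.2 (by omega)
    push_cast at this; exact this
  set S : ℂ := (∑ j, (z j.succ - z 0) * x j) / ((m : ℂ) + 2) with hS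
  have hne : ∀ i : Fin (m + 1), z i.succ - ζ ≠ 0 :=
    fun i => sub_ne_zero.2 fun h => (hζ i.succ) h.symm
  have hkey : ∀ i, (z i.succ - ζ) * x i = S := by
    intro i
    have h := congrFun heig i
    rw [hM] at h
    simp only [Matrix.mulVec, dotProduct, Pi.smul_apply, smul_eq_mul,
      sub_mul, Finset.sum_sub_distrib, ite_mul, zero_mul,
      Finset.sum_ite_eq, Finset.mem_univ, if_true] at h
    have hsum : ∑ j, (z j.succ - z 0) / ((m:ℂ) + 2) * x j = S := by
      rw [hS, Finset.sum_div]
      refine Finset.sum_congr rfl fun j _ => ?_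
      field_simp
    rw [hsum] at h
    linear_combination h
  have hSne : S ≠ 0 := by
    intro h0
    apply hx
    funext i
    have hki := hkey i
    rw [h0] at hki
    exact (mul_eq_zero.1 hki).resolve_left (hne i)
  have hxi : ∀ i, x i = S / (z i.succ - ζ) := by
    intro i
    rw [eq_div_iff (hne i)]
    linear_combination hkey i
  have hsum1 : ∑ j : Fin (m+1), (z j.succ - z 0) * x j = ((m:ℂ) + 2) * S := by
    rw [hS]; field_simp
  have hsum2 : ∑ j : Fin (m+1), (z j.succ - ζ) * x j = ((m:ℂ) + 1) * S := by
    calc ∑ j : Fin (m+1), (z j.succ - ζ) * x j = ∑ _j : Fin (m+1), S :=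
          Finset.sum_congr rfl fun j _ => hkey j
    _ = ((m:ℂ)+1) * S := by simp [Finset.sum_const]
  have hsum3 : (ζ - z 0) * ∑ j : Fin (m+1), x j = S := by
    have hrw : ∑ j : Fin (m+1), ((ζ - z 0) * x j)
        = ∑ j : Fin (m+1), ((z j.succ - z 0) * x j - (z j.succ - ζ) * x j) :=
      Finset.sum_congr rfl fun j _ => by ring
    rw [Finset.mul_sum, hrw, Finset.sum_sub_distrib, hsum1, hsum2]; ring
  have hT : ∑ j : Fin (m+1), x j = S * ∑ j : Fin (m+1), 1 / (z j.succ - ζ) := by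
    rw [Finset.mul_sum]
    exact Finset.sum_congr rfl fun j _ => by rw [hxi j]; ring
  have hfinal : (ζ - z 0) * ∑ j : Fin (m+1), 1 / (z j.succ - ζ) = 1 := by
    have h2 := hsum3
    rw [hT] at h2
    have h3 : S * ((ζ - z 0) * ∑ j : Fin (m+1), 1 / (z j.succ - ζ)) = S * 1 := by
      rw [mul_one]; linear_combination h2
    exact mul_left_cancel₀ hSne h3
  have h0 : ζ - z 0 ≠ 0 := sub_ne_zero.2 (hζ 0)
  rw [Fin.sum_univ_succ]
  have hneg : ∑ i : Fin (m+1), 1 / (ζ - z i.succ)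
      = -∑ j : Fin (m+1), 1/(z j.succ - ζ) := by
    rw [← Finset.sum_neg_distrib]
    refine Finset.sum_congr rfl fun j _ => ?_
    have h1 := sub_ne_zero.2 (hζ j.succ)
    field_simp
    rw [← neg_div, neg_sub, div_self (hne j)]
  rw [hneg]
  have hTv : ∑ j : Fin (m+1), 1/(z j.succ - ζ) = 1/(ζ - z 0) := by
    rw [eq_div_iff h0]
    linear_combination hfinal
  rw [hTv]; ring
end

section
/- Let p(z) = (z-1)(z+1)(z-a) with Re a ≥ 0, Im a ≥ 0, |a - 1| ≥ 2, and let ζ₁ = (a - √(a²+3))/3 with √(a²+3) in the closed first quadrant. Then min(|(ζ₁+1)²/(3ζ₁²+1)|^{1/2}, |(ζ₁+1)²/(2ζ₁(ζ₁-1))|^{1/3}) ≤ α*, where α* is the real root of x³ - x - 1 = 0 (terms with zero denominator interpreted as +∞, not both denominators vanishing). -/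
theorem stmt17 (α : ℝ) (hα : α ^ 3 - α - 1 = 0)
    (a : ℂ) (ha1 : 0 ≤ a.re) (ha2 : 0 ≤ a.im) (ha3 : 2 ≤ ‖a - 1‖)
    (s : ℂ) (hs : s ^ 2 = a ^ 2 + 3) (hs1 : 0 ≤ s.re) (hs2 : 0 ≤ s.im)
    (ζ₁ : ℂ) (hζ₁ : ζ₁ = (a - s) / 3) :
    (3 * ζ₁ ^ 2 + 1 ≠ 0 ∧
      Real.sqrt ‖(ζ₁ + 1) ^ 2 / (3 * ζ₁ ^ 2 + 1)‖ ≤ α) ∨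
    (2 * ζ₁ * (ζ₁ - 1) ≠ 0 ∧
      (‖(ζ₁ + 1) ^ 2 / (2 * ζ₁ * (ζ₁ - 1))‖) ^ ((1 : ℝ) / 3) ≤ α) := by
  have hα1 : 1 < α := by nlinarith [sq_nonneg (α - 1), sq_nonneg (α + 1), sq_nonneg α]
  set A : ℂ := (ζ₁ + 1) ^ 2 with hAdef
  set B : ℂ := 3 * ζ₁ ^ 2 + 1 with hBdef
  set C : ℂ := 2 * ζ₁ * (ζ₁ - 1) with hCdef
  have key : B = A + C := by rw [hAdef, hBdef, hCdef]; ring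
  by_cases hB : B = 0
  · -- then C ≠ 0 and A = -C, so |A/C| = 1
    have hC : C ≠ 0 := by
      intro hC0
      have hA0 : A = 0 := by rw [key, hC0, add_zero] at hB; exact hB
      have hζ : ζ₁ = -1 := by
        have := pow_eq_zero_iff (n := 2) (by norm_num) |>.mp hA0
        linear_combination this
      have h4 : (0:ℂ) = 4 := by rw [← hC0, hCdef, hζ]; ring
      norm_num at h4
    right
    refine ⟨hC, ?_⟩
    have hAC : A = -C := by linear_combination hB - key
    rw [hAC, neg_div, div_self hC]
    rw [norm_neg, norm_one, Real.one_rpow]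
    linarith
  · by_cases hC : C = 0
    · left
      refine ⟨hB, ?_⟩
      have hAB : A = B := by rw [key, hC, add_zero]
      rw [hAB, div_self hB, norm_one, Real.sqrt_one]
      linarith
    · by_contra hcon
      push_neg at hcon
      obtain ⟨h1, h2⟩ := hcon
      have h1 := h1 hB
      have h2 := h2 hC
      have hBpos : 0 < ‖B‖ := by simpa using hB
      have hCpos : 0 < ‖C‖ := by simpa using hC
      have habs1 : α ^ 2 < ‖A‖ / ‖B‖ := by
        rw [norm_div] at h1
        exact (Real.lt_sqrt (by linarith)).mp h1
      have habs2 : α ^ 3 < ‖A‖ / ‖C‖ := by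
        have h3 : α ^ (3:ℝ) < (‖A / C‖ ^ ((1:ℝ)/3)) ^ (3:ℝ) :=
          Real.rpow_lt_rpow (by linarith) h2 (by norm_num)
        rw [← Real.rpow_mul (norm_nonneg _), norm_div] at h3
        norm_num at h3
        exact h3
      have h1' : α ^ 2 * ‖B‖ < ‖A‖ := (lt_div_iff₀ hBpos).mp habs1
      have h2' : α ^ 3 * ‖C‖ < ‖A‖ := (lt_div_iff₀ hCpos).mp habs2
      have tri : ‖A‖ ≤ ‖B‖ + ‖C‖ := by
        have hABC : A = B - C := by rw [key]; ring
        calc ‖A‖ = ‖B - C‖ := by rw [hABC]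
        _ ≤ ‖B‖ + ‖C‖ := norm_sub_le B C
        _ = ‖B‖ + ‖C‖ := rfl
      have hApos : 0 < ‖A‖ := by nlinarith
      have hα3 : α ^ 3 = α + 1 := by linarith
      have t1 : α ^ 3 * ‖A‖ ≤ α ^ 3 * ‖B‖ + α ^ 3 * ‖C‖ := by
        nlinarith [mul_le_mul_of_nonneg_left tri (by positivity : (0:ℝ) ≤ α ^ 3)]
      have t2 : α ^ 3 * ‖B‖ < α * ‖A‖ := by
        have := mul_lt_mul_of_pos_left h1' (by linarith : (0:ℝ) < α)
        nlinarith [this]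
      nlinarith [t1, t2, h2', hApos, hα3]
end

section
/- Let p(z) = (z-1)(z+1)(z-a) with Re a ≥ 0, Im a ≥ 0, |a-1| ≥ 2, and ζ₁ = (a - √(a²+3))/3 with √(a²+3) in the closed first quadrant. Then min(|(ζ₁+1)²/(3ζ₁²+1)|^{1/2}, |(ζ₁+1)²/(2ζ₁(ζ₁-1))|^{1/3}) ≥ √(1/39.6); in particular the root z = 1 satisfies |1 - ζ₁| ≤ √39.6 · ρ(ζ₁) where ρ(ζ₁) = min(|2p(ζ₁)/p''(ζ₁)|^{1/2}, |6p(ζ₁)/p'''(ζ₁)|^{1/3}). -/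
set_option maxHeartbeats 1000000 in
private lemma stmt18_aux (a s : ℂ) (ha1 : 0 ≤ a.re) (ha3 : 2 ≤ Norm.norm (a - 1))
    (hs : s ^ 2 = a ^ 2 + 3) (hs1 : 0 ≤ s.re) :
    3 - Real.sqrt 3 ≤ Norm.norm (a + 3 - s) := by
  set t := Real.sqrt 3 with hts
  have ht2 : t ^ 2 = 3 := Real.sq_sqrt (by norm_num)
  have ht0 : 0 ≤ t := Real.sqrt_nonneg 3
  have htub : t ≤ 1.7321 := by nlinarith
  have htlb : 1.732 ≤ t := by nlinarith
  set r := Norm.norm a with hr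
  have hr0 : 0 ≤ r := norm_nonneg a
  have hr1 : 1 ≤ r := by
    have h := norm_add_le a (-1)
    simp only [← sub_eq_add_neg] at h
    simp at h
    linarith
  set u := Real.sqrt (r ^ 2 + 1) with hu
  have hu2 : u ^ 2 = r ^ 2 + 1 := Real.sq_sqrt (by positivity)
  have hu0 : 0 ≤ u := Real.sqrt_nonneg _
  have hu14 : 1.41 ≤ u := by nlinarith
  have hr2 : r ^ 2 = a.re ^ 2 + a.im ^ 2 := by
    rw [hr, Complex.sq_norm, Complex.normSq_apply]; ring
  have hua : u ≤ Norm.norm (a + 1) := by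
    have habs2 : (Norm.norm (a + 1)) ^ 2 = (a.re + 1) ^ 2 + a.im ^ 2 := by
      rw [Complex.sq_norm, Complex.normSq_apply]; simp; ring
    nlinarith [norm_nonneg (a + 1)]
  have hsb : Norm.norm s ≤ u + 1 := by
    have h1 : (Norm.norm s) ^ 2 ≤ (u + 1) ^ 2 := by
      have h2 : (Norm.norm s) ^ 2 = Norm.norm (s ^ 2) := by rw [norm_pow]
      rw [h2, hs]
      calc Norm.norm (a ^ 2 + 3) ≤ Norm.norm (a ^ 2) + Norm.norm (3:ℂ) := norm_add_le _ _
        _ = r ^ 2 + 3 := by rw [norm_pow]; simp [hr]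
        _ ≤ (u + 1) ^ 2 := by nlinarith
    nlinarith [norm_nonneg s, hu0]
  have hAub : Norm.norm (a + 3 + s) ≤ r + u + 4 := by
    calc Norm.norm (a + 3 + s) ≤ Norm.norm (a + 3) + Norm.norm s := norm_add_le _ _
      _ ≤ (Norm.norm a + Norm.norm (3:ℂ)) + (u + 1) := by
          gcongr; exact norm_add_le _ _
      _ = r + u + 4 := by simp; ring
  have hApos : 0 < Norm.norm (a + 3 + s) := by
    rw [norm_pos_iff]
    intro h
    have h0 : (a + 3 + s).re = 0 := by rw [h]; simp
    simp [Complex.add_re] at h0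
    linarith
  have hprod : Norm.norm (a + 3 - s) * Norm.norm (a + 3 + s) = 6 * Norm.norm (a + 1) := by
    rw [← norm_mul]
    have h6 : (a + 3 - s) * (a + 3 + s) = 6 * (a + 1) := by linear_combination -hs
    rw [h6, norm_mul]
    simp
  have hru : 2 * r * u ≤ 2 * r ^ 2 + 1 := by nlinarith [sq_nonneg (r - u)]
  have hq : (3 - t) * (4 * u ^ 2 + 8 * u - 1) ≤ 12 * u ^ 2 := by
    have hA : 0 ≤ t * (u - 141/100) ^ 2 := mul_nonneg ht0 (sq_nonneg _)
    have hB : 0 ≤ (u - 141/100) * (t - 1732/1000) := mul_nonneg (by linarith) (by linarith)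
    nlinarith [hA, hB]
  have key : (3 - t) * (r + u + 4) ≤ 6 * u := by
    refine le_of_mul_le_mul_right ?_ (by positivity : (0:ℝ) < 2 * u)
    have hC : 0 ≤ (3 - t) * (2 * r ^ 2 + 1 - 2 * r * u) := mul_nonneg (by linarith) (by linarith)
    nlinarith [hq, hC]
  have hmain : (3 - t) * Norm.norm (a + 3 + s) ≤ Norm.norm (a + 3 - s) * Norm.norm (a + 3 + s) := by
    rw [hprod]
    calc (3 - t) * Norm.norm (a + 3 + s) ≤ (3 - t) * (r + u + 4) := by
          apply mul_le_mul_of_nonneg_left hAub; linarith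
      _ ≤ 6 * u := key
      _ ≤ 6 * Norm.norm (a + 1) := by linarith
  exact le_of_mul_le_mul_right hmain hApos

private lemma stmt18_quad (m : ℝ) (hm : 1 - Real.sqrt 3 / 3 ≤ m) :
    3 * m ^ 2 + 6 * m + 4 ≤ 39.6 * m ^ 2 := by
  have ht2 : (Real.sqrt 3) ^ 2 = 3 := Real.sq_sqrt (by norm_num)
  have ht0 : 0 ≤ Real.sqrt 3 := Real.sqrt_nonneg 3
  have htub : Real.sqrt 3 ≤ 1.73208 := by nlinarith
  have hm0 : (0.42264 : ℝ) ≤ m := by nlinarith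
  nlinarith [sq_nonneg (m - 0.42264)]

set_option maxHeartbeats 1000000 in
theorem stmt18 (a : ℂ) (ha1 : 0 ≤ a.re) (ha2 : 0 ≤ a.im) (ha3 : 2 ≤ Norm.norm (a - 1))
    (s : ℂ) (hs : s ^ 2 = a ^ 2 + 3) (hs1 : 0 ≤ s.re) (hs2 : 0 ≤ s.im)
    (ζ₁ : ℂ) (hζ₁ : ζ₁ = (a - s) / 3)
    (p : ℂ → ℂ) (hp : p = fun z => (z - 1) * (z + 1) * (z - a)) :
    ((3 * ζ₁ ^ 2 + 1 ≠ 0 →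
        Real.sqrt (1 / 39.6) ≤ Real.sqrt (Norm.norm ((ζ₁ + 1) ^ 2 / (3 * ζ₁ ^ 2 + 1)))) ∧
      (2 * ζ₁ * (ζ₁ - 1) ≠ 0 →
        Real.sqrt (1 / 39.6) ≤
          (Norm.norm ((ζ₁ + 1) ^ 2 / (2 * ζ₁ * (ζ₁ - 1)))) ^ ((1 : ℝ) / 3))) ∧
    ((iteratedDeriv 2 p ζ₁ ≠ 0 →
        Norm.norm (1 - ζ₁) ≤
          Real.sqrt 39.6 * Real.sqrt (Norm.norm (2 * p ζ₁ / iteratedDeriv 2 p ζ₁))) ∧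
      Norm.norm (1 - ζ₁) ≤
        Real.sqrt 39.6 * (Norm.norm (6 * p ζ₁ / iteratedDeriv 3 p ζ₁)) ^ ((1 : ℝ) / 3)) := by
  -- the crux: |ζ₁ + 1| ≥ 1 - √3/3
  have hm : 1 - Real.sqrt 3 / 3 ≤ Norm.norm (ζ₁ + 1) := by
    have h1 : ζ₁ + 1 = (a + 3 - s) / 3 := by rw [hζ₁]; ring
    have h2 := stmt18_aux a s ha1 ha3 hs hs1
    rw [h1, norm_div]
    simp only [Complex.norm_ofNat]
    linarith
  set m := Norm.norm (ζ₁ + 1) with hmdef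
  have hmpos : 0 < m := by
    have ht2 : (Real.sqrt 3) ^ 2 = 3 := Real.sq_sqrt (by norm_num)
    nlinarith [Real.sqrt_nonneg 3]
  -- critical point equation
  have hcrit : 3 * ζ₁ ^ 2 - 2 * a * ζ₁ - 1 = 0 := by
    rw [hζ₁]; linear_combination hs / 3
  have hζne : ζ₁ ≠ 0 := by
    intro h; rw [h] at hcrit; norm_num at hcrit
  have hζne1 : ζ₁ ≠ 1 := by
    intro h; rw [h] at hcrit
    have ha : a = 1 := by linear_combination -hcrit / 2
    rw [ha] at ha3; simp at ha3; norm_num at ha3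
  have hd2ne : 2 * ζ₁ * (ζ₁ - 1) ≠ 0 :=
    mul_ne_zero (mul_ne_zero two_ne_zero hζne) (sub_ne_zero.2 hζne1)
  -- quadratic bounds on the denominators
  have hq1 : Norm.norm (3 * ζ₁ ^ 2 + 1) ≤ 39.6 * m ^ 2 := by
    have e : 3 * ζ₁ ^ 2 + 1 = 3 * (ζ₁ + 1) ^ 2 - 6 * (ζ₁ + 1) + 4 := by ring
    have t1 : Norm.norm (3 * (ζ₁+1) ^ 2 - 6 * (ζ₁+1) + 4)
        ≤ Norm.norm (3 * (ζ₁+1) ^ 2 - 6 * (ζ₁+1)) + Norm.norm (4:ℂ) := norm_add_le _ _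
    have t2 : Norm.norm (3 * (ζ₁+1) ^ 2 - 6 * (ζ₁+1))
        ≤ Norm.norm (3 * (ζ₁+1) ^ 2) + Norm.norm (6 * (ζ₁+1)) := by
      rw [sub_eq_add_neg]
      refine le_trans (norm_add_le _ _) ?_
      rw [norm_neg]
    have t3 : Norm.norm (3 * (ζ₁+1) ^ 2) = 3 * m ^ 2 := by
      rw [norm_mul, norm_pow]; simp [Complex.norm_ofNat, hmdef]
    have t4 : Norm.norm (6 * (ζ₁+1)) = 6 * m := by
      rw [norm_mul]; simp [Complex.norm_ofNat, hmdef]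
    have t5 : Norm.norm (4 : ℂ) = 4 := by simp [Complex.norm_ofNat]
    have t6 := stmt18_quad m hm
    rw [e]; linarith
  have hq2 : Norm.norm (2 * ζ₁ * (ζ₁ - 1)) ≤ 39.6 * m ^ 2 := by
    have e : 2 * ζ₁ * (ζ₁ - 1) = 2 * (ζ₁ + 1) ^ 2 - 6 * (ζ₁ + 1) + 4 := by ring
    have t1 : Norm.norm (2 * (ζ₁+1) ^ 2 - 6 * (ζ₁+1) + 4)
        ≤ Norm.norm (2 * (ζ₁+1) ^ 2 - 6 * (ζ₁+1)) + Norm.norm (4:ℂ) := norm_add_le _ _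
    have t2 : Norm.norm (2 * (ζ₁+1) ^ 2 - 6 * (ζ₁+1))
        ≤ Norm.norm (2 * (ζ₁+1) ^ 2) + Norm.norm (6 * (ζ₁+1)) := by
      rw [sub_eq_add_neg]
      refine le_trans (norm_add_le _ _) ?_
      rw [norm_neg]
    have t3 : Norm.norm (2 * (ζ₁+1) ^ 2) = 2 * m ^ 2 := by
      rw [norm_mul, norm_pow]; simp [Complex.norm_ofNat, hmdef]
    have t4 : Norm.norm (6 * (ζ₁+1)) = 6 * m := by
      rw [norm_mul]; simp [Complex.norm_ofNat, hmdef]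
    have t5 : Norm.norm (4 : ℂ) = 4 := by simp [Complex.norm_ofNat]
    have t6 := stmt18_quad m hm
    rw [e]; nlinarith
  -- lower bounds on the quotients
  have hX1 : ∀ _ : 3 * ζ₁ ^ 2 + 1 ≠ 0,
      1 / 39.6 ≤ Norm.norm ((ζ₁ + 1) ^ 2 / (3 * ζ₁ ^ 2 + 1)) := by
    intro h
    have hd1pos : 0 < Norm.norm (3 * ζ₁ ^ 2 + 1) := norm_pos_iff.mpr h
    rw [norm_div, norm_pow, le_div_iff₀ hd1pos]
    linarith
  have hX2 : 1 / 39.6 ≤ Norm.norm ((ζ₁ + 1) ^ 2 / (2 * ζ₁ * (ζ₁ - 1))) := by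
    have hd2pos : 0 < Norm.norm (2 * ζ₁ * (ζ₁ - 1)) := norm_pos_iff.mpr hd2ne
    rw [norm_div, norm_pow, le_div_iff₀ hd2pos]
    linarith
  have hcube : ∀ X : ℝ, 1 / 39.6 ≤ X → Real.sqrt (1 / 39.6) ≤ X ^ ((1 : ℝ) / 3) := by
    intro X hX
    have h0 : (0 : ℝ) < 1 / 39.6 := by norm_num
    rw [Real.sqrt_eq_rpow]
    calc (1 / 39.6 : ℝ) ^ ((1:ℝ)/2) ≤ (1 / 39.6 : ℝ) ^ ((1:ℝ)/3) :=
          Real.rpow_le_rpow_of_exponent_ge h0 (by norm_num) (by norm_num)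
      _ ≤ X ^ ((1:ℝ)/3) := Real.rpow_le_rpow (le_of_lt h0) hX (by norm_num)
  -- derivatives
  have hp3 : p = fun z => z ^ 3 - a * z ^ 2 - z + a := by rw [hp]; funext z; ring
  have hd1 : deriv p = fun z => 3 * z ^ 2 - 2 * a * z - 1 := by
    funext z
    rw [hp3]
    have h : HasDerivAt (fun z : ℂ => z ^ 3 - a * z ^ 2 - z + a) (3 * z ^ 2 - 2 * a * z - 1) z := by
      have h := (((hasDerivAt_pow 3 z).sub ((hasDerivAt_pow 2 z).const_mul a)).sub
        (hasDerivAt_id z)).add_const a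
      refine h.congr_deriv ?_
      push_cast; ring
    exact h.deriv
  have hd2 : deriv (deriv p) = fun z => 6 * z - 2 * a := by
    funext z
    rw [hd1]
    have h : HasDerivAt (fun z : ℂ => 3 * z ^ 2 - 2 * a * z - 1) (6 * z - 2 * a) z := by
      have h := (((hasDerivAt_pow 2 z).const_mul 3).sub
        ((hasDerivAt_id z).const_mul (2 * a))).sub_const 1
      refine h.congr_deriv ?_
      push_cast; ring
    exact h.deriv
  have hd3 : deriv (fun z : ℂ => 6 * z - 2 * a) = fun _ => (6 : ℂ) := by
    funext z
    have h : HasDerivAt (fun z : ℂ => 6 * z - 2 * a) (6 : ℂ) z := by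
      have h := ((hasDerivAt_id z).const_mul (6 : ℂ)).sub_const (2 * a)
      refine h.congr_deriv ?_
      ring
    exact h.deriv
  have hi2 : iteratedDeriv 2 p ζ₁ = 6 * ζ₁ - 2 * a := by
    rw [iteratedDeriv_succ, iteratedDeriv_one, hd2]
  have hi3 : iteratedDeriv 3 p ζ₁ = 6 := by
    rw [iteratedDeriv_succ, iteratedDeriv_succ, iteratedDeriv_one, hd2, hd3]
  -- algebraic identities
  have hpz : p ζ₁ = (ζ₁ - 1) * (ζ₁ + 1) * (ζ₁ - a) := by rw [hp]
  have hid2 : ζ₁ * (6 * ζ₁ - 2 * a) = 3 * ζ₁ ^ 2 + 1 := by linear_combination hcrit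
  have hid1 : 2 * p ζ₁ * (3 * ζ₁ ^ 2 + 1) = -((ζ₁ - 1) ^ 2 * (ζ₁ + 1) ^ 2 * (6 * ζ₁ - 2 * a)) := by
    rw [hpz]; linear_combination (4 * ζ₁ * (ζ₁ ^ 2 - 1)) * hcrit
  have hid3 : 6 * p ζ₁ * (2 * ζ₁ * (ζ₁ - 1)) = -((ζ₁ - 1) ^ 3 * (ζ₁ + 1) ^ 2 * 6) := by
    rw [hpz]; linear_combination (6 * (ζ₁ - 1) ^ 2 * (ζ₁ + 1)) * hcrit
  have habsid1 : Norm.norm (2 * p ζ₁) * Norm.norm (3 * ζ₁ ^ 2 + 1)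
      = (Norm.norm (ζ₁ - 1)) ^ 2 * m ^ 2 * Norm.norm (6 * ζ₁ - 2 * a) := by
    rw [← norm_mul, hid1, norm_neg, norm_mul, norm_mul, norm_pow, norm_pow]
  have habsid3 : Norm.norm (6 * p ζ₁) * Norm.norm (2 * ζ₁ * (ζ₁ - 1))
      = (Norm.norm (ζ₁ - 1)) ^ 3 * m ^ 2 * 6 := by
    rw [← norm_mul, hid3, norm_neg, norm_mul, norm_mul, norm_pow, norm_pow]
    simp [Complex.norm_ofNat, hmdef]
  have habs1ζ : Norm.norm (1 - ζ₁) = Norm.norm (ζ₁ - 1) := by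
    rw [← norm_neg]; ring_nf
  refine ⟨⟨fun h => Real.sqrt_le_sqrt (hX1 h), fun _ => hcube _ hX2⟩, ?_, ?_⟩
  · -- second derivative case
    intro hne
    have hne6 : 6 * ζ₁ - 2 * a ≠ 0 := by rw [← hi2]; exact hne
    have hd1ne : 3 * ζ₁ ^ 2 + 1 ≠ 0 := by rw [← hid2]; exact mul_ne_zero hζne hne6
    have h6pos : 0 < Norm.norm (6 * ζ₁ - 2 * a) := norm_pos_iff.mpr hne6
    have hd1pos : 0 < Norm.norm (3 * ζ₁ ^ 2 + 1) := norm_pos_iff.mpr hd1ne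
    have E1 : Norm.norm (2 * p ζ₁ / iteratedDeriv 2 p ζ₁)
        = (Norm.norm (ζ₁ - 1)) ^ 2 * Norm.norm ((ζ₁ + 1) ^ 2 / (3 * ζ₁ ^ 2 + 1)) := by
      rw [hi2, norm_div, norm_div, norm_pow]
      have e : (Norm.norm (ζ₁ - 1)) ^ 2 * ((Norm.norm (ζ₁ + 1)) ^ 2 / Norm.norm (3 * ζ₁ ^ 2 + 1))
          = ((Norm.norm (ζ₁ - 1)) ^ 2 * (Norm.norm (ζ₁ + 1)) ^ 2) / Norm.norm (3 * ζ₁ ^ 2 + 1) := by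
        ring
      rw [e, div_eq_div_iff (ne_of_gt h6pos) (ne_of_gt hd1pos)]
      linear_combination habsid1
    rw [E1, habs1ζ, Real.sqrt_mul (sq_nonneg _), Real.sqrt_sq (norm_nonneg _)]
    have hone : 1 ≤ Real.sqrt 39.6 * Real.sqrt (Norm.norm ((ζ₁ + 1) ^ 2 / (3 * ζ₁ ^ 2 + 1))) := by
      rw [← Real.sqrt_mul (by norm_num : (0:ℝ) ≤ 39.6)]
      rw [show (1:ℝ) = Real.sqrt 1 from (Real.sqrt_one).symm]
      apply Real.sqrt_le_sqrt
      have := hX1 hd1ne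
      linarith
    calc Norm.norm (ζ₁ - 1) = Norm.norm (ζ₁ - 1) * 1 := (mul_one _).symm
      _ ≤ Norm.norm (ζ₁ - 1) * (Real.sqrt 39.6 * Real.sqrt (Norm.norm ((ζ₁ + 1) ^ 2 / (3 * ζ₁ ^ 2 + 1)))) :=
          mul_le_mul_of_nonneg_left hone (norm_nonneg _)
      _ = Real.sqrt 39.6 * (Norm.norm (ζ₁ - 1) * Real.sqrt (Norm.norm ((ζ₁ + 1) ^ 2 / (3 * ζ₁ ^ 2 + 1)))) := by
          ring
  · -- third derivative case
    have hd2pos : 0 < Norm.norm (2 * ζ₁ * (ζ₁ - 1)) := norm_pos_iff.mpr hd2ne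
    have E2 : Norm.norm (6 * p ζ₁ / iteratedDeriv 3 p ζ₁)
        = (Norm.norm (ζ₁ - 1)) ^ 3 * Norm.norm ((ζ₁ + 1) ^ 2 / (2 * ζ₁ * (ζ₁ - 1))) := by
      rw [hi3, norm_div, norm_div, norm_pow]
      have h6 : Norm.norm (6:ℂ) = 6 := by simp [Complex.norm_ofNat]
      rw [h6]
      have e : (Norm.norm (ζ₁ - 1)) ^ 3 * ((Norm.norm (ζ₁ + 1)) ^ 2 / Norm.norm (2 * ζ₁ * (ζ₁ - 1)))
          = ((Norm.norm (ζ₁ - 1)) ^ 3 * (Norm.norm (ζ₁ + 1)) ^ 2) / Norm.norm (2 * ζ₁ * (ζ₁ - 1)) := by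
        ring
      rw [e, div_eq_div_iff (by norm_num : (6:ℝ) ≠ 0) (ne_of_gt hd2pos)]
      linear_combination habsid3
    rw [E2, habs1ζ]
    rw [Real.mul_rpow (by positivity) (norm_nonneg _)]
    have hy : ((Norm.norm (ζ₁ - 1)) ^ 3 : ℝ) ^ ((1:ℝ)/3) = Norm.norm (ζ₁ - 1) := by
      rw [← Real.rpow_natCast (Norm.norm (ζ₁ - 1)) 3, ← Real.rpow_mul (norm_nonneg _)]
      norm_num
    rw [hy]
    have hone : 1 ≤ Real.sqrt 39.6 * (Norm.norm ((ζ₁ + 1) ^ 2 / (2 * ζ₁ * (ζ₁ - 1)))) ^ ((1:ℝ)/3) := by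
      have h1 := hcube _ hX2
      have h2 : Real.sqrt 39.6 * Real.sqrt (1 / 39.6) = 1 := by
        rw [← Real.sqrt_mul (by norm_num : (0:ℝ) ≤ 39.6)]
        norm_num
      nlinarith [Real.sqrt_nonneg (39.6 : ℝ)]
    calc Norm.norm (ζ₁ - 1) = Norm.norm (ζ₁ - 1) * 1 := (mul_one _).symm
      _ ≤ Norm.norm (ζ₁ - 1) * (Real.sqrt 39.6 * (Norm.norm ((ζ₁ + 1) ^ 2 / (2 * ζ₁ * (ζ₁ - 1)))) ^ ((1:ℝ)/3)) :=
          mul_le_mul_of_nonneg_left hone (norm_nonneg _)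
      _ = Real.sqrt 39.6 * (Norm.norm (ζ₁ - 1) * (Norm.norm ((ζ₁ + 1) ^ 2 / (2 * ζ₁ * (ζ₁ - 1)))) ^ ((1:ℝ)/3)) := by
          ring
end

section
/- Let p(z) = (z-1)(z+1)(z-a) with Re a ≥ 0, Im a ≥ 0, |a-1| ≥ 2, and ζ₂ = (a + √(a²+3))/3 with √(a²+3) in the closed first quadrant. Then the root z₃ = a of p satisfies √(2/3)·|ζ₂ - a| ≤ ρ(ζ₂) and min(|4ζ₂²/(3ζ₂²+1)|^{1/2}, |4ζ₂²/(ζ₂²-1)|^{1/3}) ≤ α*, where ρ(ζ₂) = min(|2p(ζ₂)/p''(ζ₂)|^{1/2}, |6p(ζ₂)/p'''(ζ₂)|^{1/3}) and α* is the real root of x³ - x - 1 = 0. -/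
-- Part 2 auxiliary lemma
set_option maxHeartbeats 2000000 in
lemma aux2 (α : ℝ) (hα : α ^ 3 - α - 1 = 0) (w : ℂ) :
    (3 * w + 1 ≠ 0 ∧ Real.sqrt (norm (4 * w / (3 * w + 1))) ≤ α) ∨
    (w - 1 ≠ 0 ∧ (norm (4 * w / (w - 1))) ^ ((1 : ℝ) / 3) ≤ α) := by
  set r := norm w with hr
  set u := norm (3 * w + 1) with hu
  set v := norm (w - 1) with hv
  have hr0 : 0 ≤ r := norm_nonneg _
  have hu0 : 0 ≤ u := norm_nonneg _
  have hv0 : 0 ≤ v := norm_nonneg _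
  -- α bounds
  have hA1 : 1.32 < α := by nlinarith [sq_nonneg (α - 1.32), sq_nonneg (α + 1), sq_nonneg α, sq_nonneg (α + 0.66)]
  have hA2 : α < 1.33 := by nlinarith [sq_nonneg (α - 1.33), sq_nonneg (α + 1), sq_nonneg α, sq_nonneg (α + 0.66)]
  have hA0 : (0:ℝ) ≤ α := by linarith
  have h6 : α ^ 6 = α ^ 2 + 2 * α + 1 := by linear_combination (α ^ 3 + α + 1) * hα
  have h4 : α ^ 4 = α ^ 2 + α := by linear_combination α * hα
  -- geometric facts
  have e1 : u ^ 2 + 3 * v ^ 2 = 12 * r ^ 2 + 4 := by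
    rw [hr, hu, hv, Complex.sq_norm, Complex.sq_norm, Complex.sq_norm]
    simp only [Complex.normSq_apply, Complex.add_re, Complex.add_im, Complex.sub_re,
      Complex.sub_im, Complex.mul_re, Complex.mul_im, Complex.one_re, Complex.one_im,
      Complex.re_ofNat, Complex.im_ofNat]
    ring
  have e2 : |3 * r - 1| ≤ u := by
    have h := abs_norm_sub_norm_le (3 * w) (-1)
    have h3 : norm (3 * w) = 3 * r := by
      rw [norm_mul, hr]; norm_num
    simp only [norm_neg, norm_one, sub_neg_eq_add, h3] at h
    exact h
  have e2a : 3 * r - 1 ≤ u := (le_abs_self _).trans e2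
  have e2b : 1 - 3 * r ≤ u := by
    have : -(3 * r - 1) ≤ |3 * r - 1| := neg_le_abs _
    linarith
  by_cases hc : 4 * r ≤ α ^ 2 * u
  · -- left disjunct
    left
    have hupos : 0 < u := by
      rcases lt_or_eq_of_le hu0 with h | h
      · exact h
      · exfalso
        have hr00 : r = 0 := by nlinarith
        rw [hr00] at e2b; linarith [e2b, h.symm]
    constructor
    · rw [hu] at hupos
      exact fun h0 => by simp [h0] at hupos
    · have habs : norm (4 * w / (3 * w + 1)) = 4 * r / u := by
        rw [norm_div, norm_mul, ← hr, ← hu]; norm_num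
      rw [habs]
      have h1 : 4 * r / u ≤ α ^ 2 := by
        rw [div_le_iff₀ hupos]; linarith
      calc Real.sqrt (4 * r / u) ≤ Real.sqrt (α ^ 2) := Real.sqrt_le_sqrt h1
        _ = α := by rw [Real.sqrt_sq hA0]
  · -- right disjunct
    push_neg at hc
    right
    have hrpos : 0 < r := by nlinarith
    have hkey : 4 * r ≤ α ^ 3 * v := by
      by_contra hk
      push_neg at hk
      -- derive contradiction
      have s1 : α ^ 4 * u ^ 2 < 16 * r ^ 2 := by nlinarith [mul_nonneg (sq_nonneg α) hu0]
      have s2 : α ^ 6 * v ^ 2 < 16 * r ^ 2 := by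
        nlinarith [mul_nonneg (mul_nonneg hA0 (sq_nonneg α)) hv0]
      have s3 : α ^ 6 * u ^ 2 < 16 * α ^ 2 * r ^ 2 := by
        have h2pos : (0:ℝ) < α ^ 2 := by positivity
        nlinarith [mul_lt_mul_of_pos_left s1 h2pos]
      have e1' : α ^ 6 * u ^ 2 + 3 * (α ^ 6 * v ^ 2) = α ^ 6 * (12 * r ^ 2 + 4) := by
        linear_combination α ^ 6 * e1
      have P0 : α ^ 6 * (12 * r ^ 2 + 4) < 16 * α ^ 2 * r ^ 2 + 48 * r ^ 2 := by
        linarith [s3, s2, e1']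
      have h6r : α ^ 6 * r ^ 2 = α ^ 2 * r ^ 2 + 2 * (α * r ^ 2) + r ^ 2 := by
        rw [h6]; ring
      have P1 : α ^ 6 < (α - 3) ^ 2 * r ^ 2 := by nlinarith [P0, h6r]
      have s4 : (3 * α ^ 2 - 4) * r < α ^ 2 := by
        nlinarith [mul_le_mul_of_nonneg_left e2a (sq_nonneg α)]
      have hpos : 0 < 3 * α ^ 2 - 4 := by nlinarith
      have s4' : 0 ≤ (3 * α ^ 2 - 4) * r := mul_nonneg hpos.le hr0
      have s5 : ((3 * α ^ 2 - 4) * r) ^ 2 < (α ^ 2) ^ 2 := by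
        nlinarith [mul_self_lt_mul_self s4' s4]
      have hid : α ^ 6 * (3 * α ^ 2 - 4) ^ 2 = α ^ 4 * (α - 3) ^ 2 := by
        linear_combination (α ^ 4 * (9 * α ^ 3 - 15 * α + 9)) * hα
      have pos1 : 0 < (3 * α ^ 2 - 4) ^ 2 := by positivity
      have pos2 : 0 < (α - 3) ^ 2 := by nlinarith
      have t1 := mul_lt_mul_of_pos_left P1 pos1
      have t2 := mul_lt_mul_of_pos_left s5 pos2
      nlinarith [t1, t2, hid]
    have hvpos : 0 < v := by nlinarith
    constructor
    · rw [hv] at hvpos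
      exact fun h0 => by simp [h0] at hvpos
    · have habs : norm (4 * w / (w - 1)) = 4 * r / v := by
        rw [norm_div, norm_mul, ← hr, ← hv]; norm_num
      rw [habs]
      have h1 : 4 * r / v ≤ α ^ 3 := by
        rw [div_le_iff₀ hvpos]; linarith
      calc (4 * r / v) ^ ((1:ℝ)/3) ≤ (α ^ 3) ^ ((1:ℝ)/3) :=
            Real.rpow_le_rpow (by positivity) h1 (by norm_num)
        _ = α := by
            rw [← Real.rpow_natCast α 3, ← Real.rpow_mul hA0]
            norm_num

set_option maxHeartbeats 1000000 in
theorem stmt19 (α : ℝ) (hα : α ^ 3 - α - 1 = 0)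
    (a : ℂ) (ha1 : 0 ≤ a.re) (ha2 : 0 ≤ a.im) (ha3 : 2 ≤ norm (a - 1))
    (s : ℂ) (hs : s ^ 2 = a ^ 2 + 3) (hs1 : 0 ≤ s.re) (hs2 : 0 ≤ s.im)
    (ζ₂ : ℂ) (hζ₂ : ζ₂ = (a + s) / 3)
    (p : ℂ → ℂ) (hp : p = fun z => (z - 1) * (z + 1) * (z - a)) :
    ((iteratedDeriv 2 p ζ₂ ≠ 0 →
        Real.sqrt (2 / 3) * norm (ζ₂ - a) ≤
          Real.sqrt (norm (2 * p ζ₂ / iteratedDeriv 2 p ζ₂))) ∧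
      Real.sqrt (2 / 3) * norm (ζ₂ - a) ≤
        (norm (6 * p ζ₂ / iteratedDeriv 3 p ζ₂)) ^ ((1 : ℝ) / 3)) ∧
    ((3 * ζ₂ ^ 2 + 1 ≠ 0 ∧
        Real.sqrt (norm (4 * ζ₂ ^ 2 / (3 * ζ₂ ^ 2 + 1))) ≤ α) ∨
      (ζ₂ ^ 2 - 1 ≠ 0 ∧
        (norm (4 * ζ₂ ^ 2 / (ζ₂ ^ 2 - 1))) ^ ((1 : ℝ) / 3) ≤ α)) := by
  -- basic algebraic facts
  have hz : 3 * ζ₂ ^ 2 = 2 * a * ζ₂ + 1 := by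
    rw [hζ₂]; linear_combination hs / 3
  have hz0 : ζ₂ ≠ 0 := by
    intro h; rw [h] at hz; simp at hz
  have hc0 : 0 < norm ζ₂ := norm_pos_iff.mpr hz0
  set c := norm ζ₂ with hcdef
  set V := norm (ζ₂ ^ 2 - 1) with hVdef
  have hV0 : 0 ≤ V := norm_nonneg _
  -- |ζ₂|² ≥ 1/3
  have key : 1 / 3 ≤ c ^ 2 := by
    have h1 : norm s ^ 2 = norm (a ^ 2 + 3) := by
      rw [← norm_pow, hs]
    have h3 : (3 : ℝ) ≤ norm (a ^ 2 + 3) + norm (a ^ 2) := by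
      have := norm_sub_le (a ^ 2 + 3 : ℂ) (a ^ 2)
      simp only [add_sub_cancel_left] at this
      calc (3 : ℝ) = norm (3 : ℂ) := by norm_num
        _ ≤ _ := this
    have h4 : norm a ^ 2 + norm s ^ 2 ≤ norm (a + s) ^ 2 := by
      rw [Complex.sq_norm, Complex.sq_norm, Complex.sq_norm, Complex.normSq_apply,
        Complex.normSq_apply, Complex.normSq_apply, Complex.add_re, Complex.add_im]
      nlinarith [mul_nonneg ha1 hs1, mul_nonneg ha2 hs2]
    have h5 : norm (a ^ 2) = norm a ^ 2 := norm_pow _ _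
    have hca : c = norm (a + s) / 3 := by
      rw [hcdef, hζ₂, norm_div]; norm_num
    rw [hca]
    have : (3 : ℝ) ≤ norm (a + s) ^ 2 / 3 * 3 := by
      rw [div_mul_cancel₀]
      · nlinarith
      · norm_num
    nlinarith [norm_nonneg (a + s)]
  -- derivative computations
  have hp' : p = fun z => z ^ 3 - a * z ^ 2 - z + a := by
    rw [hp]; funext z; ring
  have hd1 : deriv p = fun z => 3 * z ^ 2 - 2 * a * z - 1 := by
    funext z
    rw [hp']
    have h : HasDerivAt (fun z : ℂ => z ^ 3 - a * z ^ 2 - z + a) (3 * z ^ 2 - 2 * a * z - 1) z := by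
      have h1 : HasDerivAt (fun z : ℂ => z ^ 3) (3 * z ^ 2) z := by
        simpa using hasDerivAt_pow 3 z
      have h2 : HasDerivAt (fun z : ℂ => a * z ^ 2) (a * (2 * z)) z := by
        simpa using (hasDerivAt_pow 2 z).const_mul a
      have h3 : HasDerivAt (fun z : ℂ => z) 1 z := hasDerivAt_id z
      have := ((h1.sub h2).sub h3).add_const a
      exact this.congr_deriv (by ring)
    exact h.deriv
  have hd2 : deriv (deriv p) = fun z => 6 * z - 2 * a := by
    funext z
    rw [hd1]
    have h : HasDerivAt (fun z : ℂ => 3 * z ^ 2 - 2 * a * z - 1) (6 * z - 2 * a) z := by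
      have h1 : HasDerivAt (fun z : ℂ => 3 * z ^ 2) ((3 : ℂ) * (2 * z)) z := by
        simpa using (hasDerivAt_pow 2 z).const_mul (3 : ℂ)
      have h2 : HasDerivAt (fun z : ℂ => 2 * a * z) (2 * a) z := by
        simpa using (hasDerivAt_id z).const_mul (2 * a)
      have := (h1.sub h2).sub_const 1
      exact this.congr_deriv (by ring)
    exact h.deriv
  have hd3 : deriv (deriv (deriv p)) = fun _ : ℂ => (6 : ℂ) := by
    funext z
    rw [hd2]
    have h : HasDerivAt (fun z : ℂ => 6 * z - 2 * a) (6 : ℂ) z := by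
      have h1 : HasDerivAt (fun z : ℂ => 6 * z) (6 : ℂ) z := by
        simpa using (hasDerivAt_id z).const_mul (6 : ℂ)
      exact h1.sub_const _
    exact h.deriv
  have hit2 : iteratedDeriv 2 p ζ₂ = 6 * ζ₂ - 2 * a := by
    rw [iteratedDeriv_succ, iteratedDeriv_succ, iteratedDeriv_zero, hd2]
  have hit3 : iteratedDeriv 3 p ζ₂ = 6 := by
    rw [iteratedDeriv_succ, iteratedDeriv_succ, iteratedDeriv_succ, iteratedDeriv_zero, hd3]
  -- value of p at ζ₂
  have hpz : p ζ₂ = -(ζ₂ ^ 2 - 1) ^ 2 / (2 * ζ₂) := by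
    rw [hp]
    field_simp
    linear_combination (ζ₂ ^ 2 - 1) * hz
  -- |ζ₂ - a|
  have hza : ζ₂ - a = -(ζ₂ ^ 2 - 1) / (2 * ζ₂) := by
    field_simp
    linear_combination hz
  have habs_za : norm (ζ₂ - a) = V / (2 * c) := by
    rw [hza, norm_div, norm_neg, norm_mul, ← hVdef, ← hcdef]
    norm_num
  have habs_p : norm (p ζ₂) = V ^ 2 / (2 * c) := by
    rw [hpz, norm_div, norm_neg, norm_pow, norm_mul, ← hVdef, ← hcdef]
    norm_num
  -- V ≤ 4 c²
  have hV4 : V ≤ 4 * c ^ 2 := by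
    have h1 : V ≤ c ^ 2 + 1 := by
      have h := norm_sub_le (ζ₂ ^ 2 : ℂ) 1
      simp only [norm_pow, norm_one] at h
      rw [hVdef, hcdef]
      simpa using h
    nlinarith [key]
  refine ⟨⟨?_, ?_⟩, ?_⟩
  · -- first goal
    intro h2
    rw [hit2] at h2 ⊢
    have h3 : 3 * ζ₂ ^ 2 + 1 ≠ 0 := by
      intro h0
      apply h2
      have : (6 * ζ₂ - 2 * a) * ζ₂ = 3 * ζ₂ ^ 2 + 1 := by linear_combination hz
      rw [h0] at this
      rcases mul_eq_zero.mp this with h | h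
      · exact h
      · exact absurd h hz0
    set U := norm (3 * ζ₂ ^ 2 + 1) with hUdef
    have hU0 : 0 < U := norm_pos_iff.mpr h3
    have hd2val : 6 * ζ₂ - 2 * a = (3 * ζ₂ ^ 2 + 1) / ζ₂ := by
      field_simp
      linear_combination hz
    have hquot : 2 * p ζ₂ / (6 * ζ₂ - 2 * a) = -(ζ₂ ^ 2 - 1) ^ 2 / (3 * ζ₂ ^ 2 + 1) := by
      rw [hpz, hd2val]
      field_simp
    rw [hquot, norm_div, norm_neg, norm_pow, ← hVdef, ← hUdef, habs_za]
    -- √(2/3) * (V/(2c)) ≤ √(V²/U)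
    have hUle : U ≤ 6 * c ^ 2 := by
      have h1 : U ≤ norm (3 * ζ₂ ^ 2) + norm (1 : ℂ) := norm_add_le _ _
      rw [norm_mul, norm_pow, norm_one, ← hcdef] at h1
      have : norm (3 : ℂ) = 3 := by norm_num
      rw [this] at h1
      nlinarith [key]
    have lhs_eq : Real.sqrt (2 / 3) * (V / (2 * c)) = Real.sqrt (2 / 3 * (V / (2 * c)) ^ 2) := by
      rw [Real.sqrt_mul (by norm_num), Real.sqrt_sq (by positivity)]
    rw [lhs_eq]
    apply Real.sqrt_le_sqrt
    have hcne : c ≠ 0 := hc0.ne'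
    have lhs2 : 2 / 3 * (V / (2 * c)) ^ 2 = 2 * V ^ 2 / (12 * c ^ 2) := by
      ring
    rw [lhs2, div_le_div_iff₀ (by positivity) hU0]
    nlinarith [mul_nonneg (sq_nonneg V) (by linarith : (0:ℝ) ≤ 6 * c ^ 2 - U)]
  · -- second goal
    rw [hit3, habs_za]
    have h6 : (6 : ℂ) * p ζ₂ / 6 = p ζ₂ := by field_simp
    rw [h6, habs_p]
    set L := Real.sqrt (2 / 3) * (V / (2 * c)) with hLdef
    have hL0 : 0 ≤ L := by positivity
    have ht : Real.sqrt (2 / 3) ≤ 1 := by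
      rw [show (1:ℝ) = Real.sqrt 1 by simp]
      exact Real.sqrt_le_sqrt (by norm_num)
    have ht0 : 0 ≤ Real.sqrt (2 / 3) := Real.sqrt_nonneg _
    have hcube : L ^ 3 ≤ V ^ 2 / (2 * c) := by
      have expand : L ^ 3 = Real.sqrt (2 / 3) ^ 3 * V ^ 3 / (8 * c ^ 3) := by
        rw [hLdef]; field_simp; ring
      rw [expand, div_le_div_iff₀ (by positivity) (by positivity)]
      have h1 : Real.sqrt (2 / 3) ^ 3 ≤ 1 := by
        calc Real.sqrt (2 / 3) ^ 3 ≤ 1 ^ 3 := pow_le_pow_left₀ ht0 ht 3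
          _ = 1 := one_pow 3
      have h2 : V ^ 3 ≤ 4 * c ^ 2 * V ^ 2 := by
        nlinarith [mul_le_mul_of_nonneg_right hV4 (sq_nonneg V)]
      have h3 : Real.sqrt (2 / 3) ^ 3 * (V ^ 3 * (2 * c)) ≤ 1 * (V ^ 3 * (2 * c)) :=
        mul_le_mul_of_nonneg_right h1 (by positivity)
      have h4 : V ^ 3 * (2 * c) ≤ 4 * c ^ 2 * V ^ 2 * (2 * c) :=
        mul_le_mul_of_nonneg_right h2 (by positivity)
      nlinarith [h3, h4]
    calc L = (L ^ 3) ^ ((1 : ℝ) / 3) := by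
          rw [← Real.rpow_natCast L 3, ← Real.rpow_mul hL0]
          norm_num
      _ ≤ (V ^ 2 / (2 * c)) ^ ((1 : ℝ) / 3) :=
          Real.rpow_le_rpow (by positivity) hcube (by norm_num)
  · exact aux2 α hα (ζ₂ ^ 2)
end
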